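/- Let h : K → ℝ be differentiable on a convex set K ⊆ ℝ^n, and suppose the first-order condition holds: for all x, y ∈ K, h(x) ≤ h(y) implies ⟨∇h(y), x − y⟩ ≤ 0. Then h is quasiconvex on K. -/
import Mathlib

open Set Filter Topology

/-- Sufficiency of the first-order condition for quasiconvexity on a convex set. -/
theorem quasiconvex_of_first_order (n : ℕ) (K : Set (Fin n → ℝ)) (hK : Convex ℝ K)
    (h : (Fin n → ℝ) → ℝ) (hdiff : DifferentiableOn ℝ h K)
    (hfo : ∀ x ∈ K, ∀ y ∈ K, h x ≤ h y → fderivWithin ℝ h K y (x - y) ≤ 0) :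
    ∀ x ∈ K, ∀ y ∈ K, ∀ l ∈ Set.Icc (0:ℝ) 1,
      h (l • x + (1 - l) • y) ≤ max (h x) (h y) := by
  intro x hx y hy l hl
  by_contra hcon
  push_neg at hcon
  set M := max (h x) (h y) with hM
  set z : ℝ → (Fin n → ℝ) := fun t => t • x + (1 - t) • y with hzdef
  set g : ℝ → ℝ := fun t => h (z t) with hgdef
  have hzK : ∀ t ∈ Icc (0:ℝ) 1, z t ∈ K := fun t ht =>
    hK hx hy ht.1 (by linarith [ht.2]) (by ring)
  -- derivative of g within Icc 0 1
  have hzform : z = fun t : ℝ => t • (x - y) + y := by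
    funext t; ext i
    simp [hzdef]; ring
  have hgd : ∀ t ∈ Icc (0:ℝ) 1,
      HasDerivWithinAt g (fderivWithin ℝ h K (z t) (x - y)) (Icc 0 1) t := by
    intro t ht
    have hz' : HasDerivWithinAt z (x - y) (Icc 0 1) t := by
      rw [hzform]
      simpa using ((hasDerivAt_id t).smul_const (x - y)).add_const y |>.hasDerivWithinAt
    exact ((hdiff (z t) (hzK t ht)).hasFDerivWithinAt).comp_hasDerivWithinAt t hz'
      (fun s hs => hzK s hs)
  have hgc : ContinuousOn g (Icc 0 1) := fun t ht =>
    (hgd t ht).differentiableWithinAt.continuousWithinAt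
  -- where g > M, derivative is zero
  have hd0 : ∀ t ∈ Ioo (0:ℝ) 1, M < g t → fderivWithin ℝ h K (z t) (x - y) = 0 := by
    intro t ht hgt
    have htK : z t ∈ K := hzK t ⟨ht.1.le, ht.2.le⟩
    have h1 : fderivWithin ℝ h K (z t) (x - z t) ≤ 0 :=
      hfo x hx (z t) htK (le_of_lt (lt_of_le_of_lt (le_max_left _ _) hgt))
    have h2 : fderivWithin ℝ h K (z t) (y - z t) ≤ 0 :=
      hfo y hy (z t) htK (le_of_lt (lt_of_le_of_lt (le_max_right _ _) hgt))
    have e1 : x - z t = (1 - t) • (x - y) := by ext i; simp [hzdef]; ring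
    have e2 : y - z t = (-t) • (x - y) := by ext i; simp [hzdef]; ring
    rw [e1, map_smul, smul_eq_mul] at h1
    rw [e2, map_smul, smul_eq_mul] at h2
    nlinarith [ht.1, ht.2]
  have hg0 : g 0 = h y := by simp [hgdef, hzdef]
  have hg1 : g 1 = h x := by simp [hgdef, hzdef]
  have hgl : M < g l := hcon
  have hlI : l ∈ Ioo (0:ℝ) 1 := by
    constructor
    · rcases lt_or_eq_of_le hl.1 with h' | h'
      · exact h'
      · exfalso
        have := hgl; rw [← h', hg0] at this
        exact absurd this (not_lt.2 (le_max_right _ _))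
    · rcases lt_or_eq_of_le hl.2 with h' | h'
      · exact h'
      · exfalso
        have := hgl; rw [h', hg1] at this
        exact absurd this (not_lt.2 (le_max_left _ _))
  -- supremum of points ≤ M before l
  set S : Set ℝ := Icc 0 l ∩ g ⁻¹' (Iic M) with hSdef
  have hS0 : (0:ℝ) ∈ S := ⟨⟨le_refl 0, hlI.1.le⟩, by rw [Set.mem_preimage, Set.mem_Iic, hg0]; exact le_max_right _ _⟩
  have hSbdd : BddAbove S := ⟨l, fun t ht => ht.1.2⟩
  have hSclosed : IsClosed S := by
    apply (hgc.mono (Icc_subset_Icc le_rfl hlI.2.le)).preimage_isClosed_of_isClosed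
      isClosed_Icc isClosed_Iic
  set a := sSup S with hadef
  have haS : a ∈ S := hSclosed.csSup_mem ⟨0, hS0⟩ hSbdd
  have ha0 : 0 ≤ a := haS.1.1
  have hal : a ≤ l := haS.1.2
  have hgaM : g a ≤ M := haS.2
  have haltl : a < l := lt_of_le_of_ne hal fun he => absurd hgl (not_lt.2 (he ▸ hgaM))
  have hgtM : ∀ t ∈ Ioc a l, M < g t := by
    intro t ht
    by_contra hle
    push_neg at hle
    exact absurd (le_csSup hSbdd ⟨⟨le_trans ha0 ht.1.le, ht.2⟩, hle⟩) (not_le.2 ht.1)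
  -- g is constant equal to g l on (a, l]
  have hconst : ∀ c ∈ Ioo a l, g c = g l := by
    intro c hc
    have hsub : Icc c l ⊆ Icc 0 1 :=
      Icc_subset_Icc (le_trans ha0 hc.1.le) hlI.2.le
    have hdiffg : DifferentiableOn ℝ g (Icc c l) := fun t ht =>
      ((hgd t (hsub ht)).differentiableWithinAt).mono hsub
    have hud : UniqueDiffOn ℝ (Icc c l) := uniqueDiffOn_Icc hc.2
    have hder : ∀ t ∈ Ico c l, derivWithin g (Icc c l) t = 0 := by
      intro t ht
      have htI : t ∈ Ioo (0:ℝ) 1 := ⟨lt_of_le_of_lt ha0 (lt_of_lt_of_le hc.1 ht.1),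
        lt_of_lt_of_le ht.2 hlI.2.le⟩
      have hMt : M < g t := hgtM t ⟨lt_of_lt_of_le hc.1 ht.1, ht.2.le⟩
      have : HasDerivWithinAt g 0 (Icc c l) t := by
        have := (hgd t (hsub ⟨ht.1, ht.2.le⟩)).mono hsub
        rwa [hd0 t htI hMt] at this
      exact this.derivWithin (hud t ⟨ht.1, ht.2.le⟩)
    exact (constant_of_derivWithin_zero hdiffg hder l ⟨hc.2.le, le_refl l⟩).symm
  -- take limit as c → a⁺ to get g a = g l
  have hne : (𝓝[Ioo a l] a).NeBot := left_nhdsWithin_Ioo_neBot haltl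
  have h1 : Tendsto g (𝓝[Ioo a l] a) (𝓝 (g a)) :=
    ((hgc a ⟨ha0, le_trans hal hlI.2.le⟩).mono
      (fun t (ht : t ∈ Ioo a l) => ⟨le_trans ha0 ht.1.le, le_trans ht.2.le hlI.2.le⟩)).tendsto
  have h2 : Tendsto g (𝓝[Ioo a l] a) (𝓝 (g l)) := by
    refine tendsto_const_nhds.congr' ?_
    filter_upwards [self_mem_nhdsWithin] with t ht
    exact (hconst t ht).symm
  have : g a = g l := tendsto_nhds_unique h1 h2
  rw [this] at hgaM
  exact absurd hgl (not_lt.2 hgaM)
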